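/- (Disjoint alignments onto different fragments) Let X, Y be strings, let 0 ≤ i ≤ j ≤ |Y| and 0 ≤ i' ≤ j' ≤ |Y|, and let A : X → Y[i..j) and A' : X → Y[i'..j') be alignments which, interpreted as paths in the alignment graph AG(X,Y), share no common diagonal edge. Then selfed(X) ≤ |i - i'| + ed_A(X, Y[i..j)) + ed_{A'}(X, Y[i'..j')) + |j - j'|. -/

import Mathlib

abbrev Pt : Type := ℕ × ℕ

/-- A single step in an alignment path: right (deletion of an `X`-character),
down (insertion of a `Y`-character), or diagonal (aligning a pair of characters). -/
def AlignStep (p q : Pt) : Prop :=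
  q = (p.1 + 1, p.2) ∨ q = (p.1, p.2 + 1) ∨ q = (p.1 + 1, p.2 + 1)

/-- `A` is a monotone lattice path from `s` to `t` in the alignment graph. -/
def IsPath (s t : Pt) (A : List Pt) : Prop :=
  A.head? = some s ∧ A.getLast? = some t ∧ A.Chain' AlignStep

/-- The edges (consecutive pairs) of a path. -/
def edges (A : List Pt) : List (Pt × Pt) := A.zip A.tail

/-- Unweighted edit cost contributed by one edge: a diagonal edge costs 0 if the
two characters match and 1 otherwise (substitution); horizontal/vertical edges
(deletions/insertions) cost 1. -/
def edStep {α : Type*} [DecidableEq α] (X Y : List α) (e : Pt × Pt) : ℕ :=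
  if e.2 = (e.1.1 + 1, e.1.2 + 1) then (if X[e.1.1]? = Y[e.1.2]? then 0 else 1) else 1

/-- The number of edits made by the alignment (path) `A` of `X` onto `Y`. -/
def edCost {α : Type*} [DecidableEq α] (X Y : List α) (A : List Pt) : ℕ :=
  ((edges A).map (edStep X Y)).sum

/-- Weighted cost contributed by one edge, under weight function `w` (with `none` playing
the role of `ε`): diagonal edges cost `w X[x] Y[y]`, horizontal `w X[x] ε`, vertical `w ε Y[y]`. -/
noncomputable def wStep {α : Type*} (w : Option α → Option α → ℝ) (X Y : List α)
    (e : Pt × Pt) : ℝ :=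
  if e.2 = (e.1.1 + 1, e.1.2 + 1) then w (X[e.1.1]?) (Y[e.1.2]?)
  else if e.2 = (e.1.1 + 1, e.1.2) then w (X[e.1.1]?) none
  else w none (Y[e.1.2]?)

/-- The weighted cost of the alignment (path) `A` of `X` onto `Y` under `w`. -/
noncomputable def wCost {α : Type*} (w : Option α → Option α → ℝ) (X Y : List α)
    (A : List Pt) : ℝ :=
  ((edges A).map (wStep w X Y)).sum

/-- Unweighted (Levenshtein) edit distance. -/
noncomputable def ed {α : Type*} [DecidableEq α] (X Y : List α) : ℕ :=
  sInf { c | ∃ A, IsPath (0, 0) (X.length, Y.length) A ∧ edCost X Y A = c }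

/-- Weighted edit distance under `w`. -/
noncomputable def wed {α : Type*} (w : Option α → Option α → ℝ) (X Y : List α) : ℝ :=
  sInf { c | ∃ A, IsPath (0, 0) (X.length, Y.length) A ∧ wCost w X Y A = c }

/-- A path contains no diagonal edge on the main diagonal,
i.e. it never aligns a character to itself. -/
def NoSelfDiag (A : List Pt) : Prop :=
  ∀ e ∈ edges A, ¬ (e.1.1 = e.1.2 ∧ e.2 = (e.1.1 + 1, e.1.2 + 1))

/-- The self-edit distance of `X`: the minimum number of edits over all
self-alignments of `X` (alignments of `X` onto itself never aligning a character
to itself). -/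
noncomputable def selfed {α : Type*} [DecidableEq α] (X : List α) : ℕ :=
  sInf { c | ∃ A, IsPath (0, 0) (X.length, X.length) A ∧ NoSelfDiag A ∧ edCost X X A = c }

/-- The fragment `X[a..b)`. -/
def frag {α : Type*} (X : List α) (a b : ℕ) : List α := (X.drop a).take (b - a)

/-! The two alignments are composed: reading `A` forwards and `A'` backwards gives an alignment of
`X` onto itself. After padding both paths with insertions so that they run between the same rows
`min i i'` and `max j j'` (this costs `Nat.dist i i' + Nat.dist j j'`), walk along them together,
advancing a deletion of either path on its own and otherwise advancing both paths through the
same row of `Y`. Two diagonal steps through the same row align `X[x]` and `X[x']` to the same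
character, so the composed step costs at most the sum of theirs; and `x ≠ x'` because the paths
share no diagonal edge, so the composition never aligns a character of `X` to itself. -/

section

variable {α : Type*} [DecidableEq α]

lemma AlignStep.le {p q : Pt} (h : AlignStep p q) : p ≤ q := by
  rcases h with rfl | rfl | rfl <;> simp [Prod.le_def]

lemma IsPath.singleton_or_cons {s t : Pt} {P : List Pt} (h : IsPath s t P) :
    (P = [s] ∧ s = t) ∨ ∃ b Q, P = s :: Q ∧ AlignStep s b ∧ IsPath b t Q := by
  obtain ⟨hhead, hlast, hchain⟩ := h
  rcases P with _ | ⟨p, _ | ⟨b, Q⟩⟩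
  · simp at hhead
  · simp_all
  · simp only [List.head?_cons, Option.some.injEq] at hhead
    subst hhead
    have hchain := List.isChain_cons_cons.1 hchain
    exact .inr ⟨b, b :: Q, rfl, hchain.1, rfl, by simpa using hlast, hchain.2⟩

lemma IsPath.cons {s b t : Pt} {Q : List Pt} (hs : AlignStep s b) (h : IsPath b t Q) :
    IsPath s t (s :: Q) := by
  obtain ⟨hhead, hlast, hchain⟩ := h
  rcases Q with _ | ⟨c, Q⟩
  · simp at hhead
  · simp only [List.head?_cons, Option.some.injEq] at hhead
    subst hhead
    exact ⟨rfl, by simpa using hlast, List.isChain_cons_cons.2 ⟨hs, hchain⟩⟩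

lemma IsPath.concat {s t u : Pt} {A : List Pt} (h : IsPath s t A) (htu : AlignStep t u) :
    IsPath s u (A ++ [u]) := by
  obtain ⟨hhead, hlast, hchain⟩ := h
  refine ⟨?_, by simp, hchain.append (List.isChain_singleton u) ?_⟩
  · rcases A with _ | ⟨a, A⟩
    exacts [by simp at hhead, hhead]
  · simp [hlast, htu]

lemma IsPath.le {s t : Pt} {P : List Pt} (h : IsPath s t P) : s ≤ t := by
  induction P generalizing s with
  | nil => simp [IsPath] at h
  | cons p Q ih =>
    rcases h.singleton_or_cons with ⟨-, rfl⟩ | ⟨b, Q', hPQ, hsb, hQ⟩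
    · exact le_rfl
    · obtain ⟨-, rfl⟩ := List.cons_eq_cons.1 hPQ
      exact hsb.le.trans (ih hQ)

lemma IsPath.edges_cons {b t : Pt} {Q : List Pt} (h : IsPath b t Q) (s : Pt) :
    edges (s :: Q) = (s, b) :: edges Q := by
  rcases Q with _ | ⟨c, Q⟩
  · simp [IsPath] at h
  · obtain rfl : c = b := by simpa using h.1
    rfl

lemma edges_concat {t : Pt} {A : List Pt} (h : A.getLast? = some t) (u : Pt) :
    edges (A ++ [u]) = edges A ++ [(t, u)] := by
  induction A with
  | nil => simp at h
  | cons a A ih =>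
    rcases A with _ | ⟨b, A⟩
    · simp_all [edges]
    · rw [List.getLast?_cons_cons] at h
      change (a, b) :: edges (b :: A ++ [u]) = (a, b) :: edges (b :: A) ++ [(t, u)]
      rw [ih h, List.cons_append]

lemma IsPath.edCost_cons {b t : Pt} {Q : List Pt} (h : IsPath b t Q) (X Y : List α) (s : Pt) :
    edCost X Y (s :: Q) = edStep X Y (s, b) + edCost X Y Q := by
  simp [edCost, h.edges_cons]

lemma edStep_right (X Y : List α) (p : Pt) : edStep X Y (p, (p.1 + 1, p.2)) = 1 := by
  simp [edStep]

lemma edStep_down (X Y : List α) (x y : ℕ) : edStep X Y ((x, y), (x, y + 1)) = 1 := by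
  simp [edStep]

lemma edStep_diag_le_add (X Y : List α) (x x' y : ℕ) :
    edStep X X ((x, x'), (x + 1, x' + 1)) ≤
      edStep X Y ((x, y), (x + 1, y + 1)) + edStep X Y ((x', y), (x' + 1, y + 1)) := by
  simp only [edStep, if_true]
  split_ifs <;> simp_all

def diagEdges (A : List Pt) : List (Pt × Pt) :=
  (edges A).filter fun e => e.2 = (e.1.1 + 1, e.1.2 + 1)

lemma IsPath.diagEdges_cons {b t : Pt} {Q : List Pt} (h : IsPath b t Q) (s : Pt) :
    diagEdges (s :: Q) =
      if b = (s.1 + 1, s.2 + 1) then (s, b) :: diagEdges Q else diagEdges Q := by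
  simp only [diagEdges, h.edges_cons, List.filter_cons, decide_eq_true_eq]

lemma IsPath.mem_diagEdges_cons {s t : Pt} {Q : List Pt} (h : IsPath (s.1 + 1, s.2 + 1) t Q) :
    (s, (s.1 + 1, s.2 + 1)) ∈ diagEdges (s :: Q) := by
  simp [h.diagEdges_cons]

lemma diagEdges_subset_cons (s : Pt) (Q : List Pt) : diagEdges Q ⊆ diagEdges (s :: Q) := by
  rcases Q with _ | ⟨b, Q⟩
  · simp [diagEdges, edges]
  · exact ((List.sublist_cons_self _ _).filter _).subset

def HasSelfAlignmentFrom (X : List α) (q : Pt) (c : ℕ) : Prop :=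
  ∃ B, IsPath q (X.length, X.length) B ∧ NoSelfDiag B ∧ edCost X X B ≤ c

namespace HasSelfAlignmentFrom

variable {X : List α}

lemma endpoint (X : List α) : HasSelfAlignmentFrom X (X.length, X.length) 0 :=
  ⟨[_], ⟨rfl, rfl, List.isChain_singleton _⟩, by simp [NoSelfDiag, edges], le_rfl⟩

lemma mono {q : Pt} {c d : ℕ} (h : HasSelfAlignmentFrom X q c) (hcd : c ≤ d) :
    HasSelfAlignmentFrom X q d :=
  let ⟨B, hB, hBself, hBcost⟩ := h
  ⟨B, hB, hBself, hBcost.trans hcd⟩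

lemma selfed_le {c : ℕ} (h : HasSelfAlignmentFrom X (0, 0) c) : selfed X ≤ c := by
  obtain ⟨B, hB, hBself, hBcost⟩ := h
  refine le_trans (Nat.sInf_le ?_) hBcost
  exact ⟨B, hB, hBself, rfl⟩

lemma cons {q r : Pt} {c : ℕ} (hqr : AlignStep q r)
    (hself : ¬ (q.1 = q.2 ∧ r = (q.1 + 1, q.2 + 1))) (h : HasSelfAlignmentFrom X r c) :
    HasSelfAlignmentFrom X q (edStep X X (q, r) + c) := by
  obtain ⟨B, hB, hBself, hBcost⟩ := h
  refine ⟨q :: B, hB.cons hqr, ?_, ?_⟩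
  · intro e he
    rw [hB.edges_cons] at he
    rcases List.mem_cons.1 he with rfl | he
    exacts [hself, hBself e he]
  · rw [hB.edCost_cons]
    omega

lemma cons_right {x x' c : ℕ} (h : HasSelfAlignmentFrom X (x + 1, x') c) :
    HasSelfAlignmentFrom X (x, x') (1 + c) := by
  simpa [edStep] using h.cons (q := (x, x')) (.inl rfl) (by simp)

lemma cons_down {x x' c : ℕ} (h : HasSelfAlignmentFrom X (x, x' + 1) c) :
    HasSelfAlignmentFrom X (x, x') (1 + c) := by
  simpa [edStep] using h.cons (q := (x, x')) (.inr (.inl rfl)) (by simp)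

lemma cons_diag {x x' c : ℕ} (hx : x ≠ x') (h : HasSelfAlignmentFrom X (x + 1, x' + 1) c) :
    HasSelfAlignmentFrom X (x, x') (edStep X X ((x, x'), (x + 1, x' + 1)) + c) :=
  h.cons (.inr (.inr rfl)) (by simp [hx])

variable {Y : List α}

lemma cons_right_edCost {s u : Pt} {x' c : ℕ} {Q : List Pt} (hQ : IsPath (s.1 + 1, s.2) u Q)
    (h : HasSelfAlignmentFrom X (s.1 + 1, x') (edCost X Y Q + c)) :
    HasSelfAlignmentFrom X (s.1, x') (edCost X Y (s :: Q) + c) := by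
  rw [hQ.edCost_cons, edStep_right]
  simpa [add_assoc] using h.cons_right

lemma cons_down_edCost {s' u : Pt} {x c : ℕ} {Q' : List Pt} (hQ' : IsPath (s'.1 + 1, s'.2) u Q')
    (h : HasSelfAlignmentFrom X (x, s'.1 + 1) (c + edCost X Y Q')) :
    HasSelfAlignmentFrom X (x, s'.1) (c + edCost X Y (s' :: Q')) := by
  rw [hQ'.edCost_cons, edStep_right]
  exact h.cons_down.mono (by omega)

lemma cons_rise {s s' b b' : Pt} {c : ℕ} (hy : s.2 = s'.2)
    (hb : b = (s.1, s.2 + 1) ∨ b = (s.1 + 1, s.2 + 1))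
    (hb' : b' = (s'.1, s'.2 + 1) ∨ b' = (s'.1 + 1, s'.2 + 1))
    (hne : s.1 = s'.1 → b = (s.1 + 1, s.2 + 1) → b' = (s'.1 + 1, s'.2 + 1) → False)
    (h : HasSelfAlignmentFrom X (b.1, b'.1) c) :
    HasSelfAlignmentFrom X (s.1, s'.1) (edStep X Y (s, b) + edStep X Y (s', b') + c) := by
  obtain ⟨x, y⟩ := s
  obtain ⟨x', y'⟩ := s'
  obtain rfl : y = y' := hy
  rcases hb with rfl | rfl <;> rcases hb' with rfl | rfl <;> dsimp only at h hne ⊢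
  · exact h.mono (by omega)
  · exact h.cons_down.mono (by rw [edStep_down]; omega)
  · exact h.cons_right.mono (by rw [edStep_down]; omega)
  · refine (h.cons_diag fun hx => hne hx rfl rfl).mono ?_
    have := edStep_diag_le_add X Y x x' y
    omega

end HasSelfAlignmentFrom

theorem hasSelfAlignmentFrom_of_disjoint {X Y : List α} {t : ℕ} {s s' : Pt} {P P' : List Pt}
    (hP : IsPath s (X.length, t) P) (hP' : IsPath s' (X.length, t) P') (hy : s.2 = s'.2)
    (hd : (diagEdges P).Disjoint (diagEdges P')) :
    HasSelfAlignmentFrom X (s.1, s'.1) (edCost X Y P + edCost X Y P') := by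
  rcases hP.singleton_or_cons with ⟨rfl, rfl⟩ | ⟨b, Q, rfl, hsb, hQ⟩
  · rcases hP'.singleton_or_cons with ⟨rfl, rfl⟩ | ⟨b', Q', rfl, hsb', hQ'⟩
    · exact .endpoint X
    rcases hsb' with rfl | hb'
    · exact .cons_down_edCost hQ' (hasSelfAlignmentFrom_of_disjoint hP hQ' hy
        (List.disjoint_of_subset_right (diagEdges_subset_cons _ _) hd))
    · have := hQ'.le.2
      rcases hb' with rfl | rfl <;> simp only at this hy <;> omega
  rcases hsb with rfl | hb
  · exact .cons_right_edCost hQ (hasSelfAlignmentFrom_of_disjoint hQ hP' hy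
      (List.disjoint_of_subset_left (diagEdges_subset_cons _ _) hd))
  have hb2 : b.2 = s.2 + 1 := by rcases hb with rfl | rfl <;> rfl
  rcases hP'.singleton_or_cons with ⟨rfl, rfl⟩ | ⟨b', Q', rfl, hsb', hQ'⟩
  · have := hQ.le.2
    simp only at this hy
    omega
  rcases hsb' with rfl | hb'
  · exact .cons_down_edCost hQ' (hasSelfAlignmentFrom_of_disjoint hP hQ' hy
      (List.disjoint_of_subset_right (diagEdges_subset_cons _ _) hd))
  have hb2' : b'.2 = s'.2 + 1 := by rcases hb' with rfl | rfl <;> rfl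
  have ih := hasSelfAlignmentFrom_of_disjoint (Y := Y) hQ hQ' (by omega)
    (List.disjoint_of_subset_left (diagEdges_subset_cons _ _)
      (List.disjoint_of_subset_right (diagEdges_subset_cons _ _) hd))
  have hne : s.1 = s'.1 → b = (s.1 + 1, s.2 + 1) → b' = (s'.1 + 1, s'.2 + 1) → False := by
    rintro hx rfl rfl
    obtain rfl : s = s' := Prod.ext hx hy
    exact hd hQ.mem_diagEdges_cons hQ'.mem_diagEdges_cons
  rw [hQ.edCost_cons, hQ'.edCost_cons]
  exact (ih.cons_rise (Y := Y) hy hb hb' hne).mono (by omega)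
termination_by P.length + P'.length

lemma IsPath.exists_extend_start (X Y : List α) {x a : ℕ} {t : Pt} (k : ℕ) {A : List Pt}
    (hA : IsPath (x, a + k) t A) :
    ∃ A', IsPath (x, a) t A' ∧ edCost X Y A' = k + edCost X Y A ∧ diagEdges A' = diagEdges A := by
  induction k generalizing A with
  | zero => exact ⟨A, hA, by simp, rfl⟩
  | succ k ih =>
    rw [← Nat.add_assoc] at hA
    obtain ⟨A', hA', hcost, hdiag⟩ := ih (hA.cons (s := (x, a + k)) (.inr (.inl rfl)))
    refine ⟨A', hA', ?_, ?_⟩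
    · rw [hcost, hA.edCost_cons, edStep_down]
      omega
    · simp [hdiag, hA.diagEdges_cons]

lemma IsPath.exists_extend_finish (X Y : List α) {x b : ℕ} {s : Pt} (k : ℕ) {A : List Pt}
    (hA : IsPath s (x, b) A) :
    ∃ A', IsPath s (x, b + k) A' ∧ edCost X Y A' = edCost X Y A + k ∧
      diagEdges A' = diagEdges A := by
  induction k with
  | zero => exact ⟨A, hA, rfl, rfl⟩
  | succ k ih =>
    obtain ⟨A', hA', hcost, hdiag⟩ := ih
    refine ⟨A' ++ [(x, b + k + 1)], hA'.concat (.inr (.inl rfl)), ?_, ?_⟩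
    · rw [edCost, edges_concat hA'.2.1, List.map_append, List.sum_append, ← edCost, hcost,
        List.map_singleton, List.sum_singleton, edStep_down, Nat.add_assoc]
    · rw [diagEdges, edges_concat hA'.2.1, List.filter_append, ← diagEdges, hdiag]
      simp

lemma IsPath.exists_extend_vertical (X Y : List α) {x y x' y' a b : ℕ} {A : List Pt}
    (hA : IsPath (x, y) (x', y') A) (ha : a ≤ y) (hb : y' ≤ b) :
    ∃ A', IsPath (x, a) (x', b) A' ∧ edCost X Y A' = (y - a) + edCost X Y A + (b - y') ∧
      diagEdges A' = diagEdges A := by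
  obtain ⟨k, rfl⟩ := Nat.exists_eq_add_of_le ha
  obtain ⟨m, rfl⟩ := Nat.exists_eq_add_of_le hb
  obtain ⟨A₁, hA₁, hcost₁, hdiag₁⟩ := hA.exists_extend_finish X Y m
  obtain ⟨A₂, hA₂, hcost₂, hdiag₂⟩ := hA₁.exists_extend_start X Y k
  exact ⟨A₂, hA₂, by omega, hdiag₂.trans hdiag₁⟩

end

theorem selfed_le_of_disjoint_fragment_alignments_general {α : Type*} [DecidableEq α]
    (X Y : List α) (i j i' j' : ℕ)
    (A A' : List Pt)
    (hA : IsPath (0, i) (X.length, j) A)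
    (hA' : IsPath (0, i') (X.length, j') A')
    (hdisj : ∀ e : Pt × Pt, e.2 = (e.1.1 + 1, e.1.2 + 1) →
      e ∈ edges A → e ∉ edges A') :
    selfed X ≤ Nat.dist i i' + edCost X Y A + edCost X Y A' + Nat.dist j j' := by
  obtain ⟨B, hB, hBcost, hBdiag⟩ :=
    hA.exists_extend_vertical X Y (min_le_left i i') (le_max_left j j')
  obtain ⟨B', hB', hB'cost, hB'diag⟩ :=
    hA'.exists_extend_vertical X Y (min_le_right i i') (le_max_right j j')
  have hd : (diagEdges B).Disjoint (diagEdges B') := by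
    rw [hBdiag, hB'diag]
    intro e he he'
    simp only [diagEdges, List.mem_filter, decide_eq_true_eq] at he he'
    exact hdisj e he.2 he.1 he'.1
  have := (hasSelfAlignmentFrom_of_disjoint (Y := Y) hB hB' rfl hd).selfed_le
  rw [Nat.dist, Nat.dist]
  omega

/-- Disjoint alignments of `X` onto two fragments of `Y`
bound the self-edit distance of `X`. -/
theorem selfed_le_of_disjoint_fragment_alignments {α : Type*} [DecidableEq α]
    (X Y : List α) (i j i' j' : ℕ)
    (hij : i ≤ j) (hj : j ≤ Y.length) (hij' : i' ≤ j') (hj' : j' ≤ Y.length)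
    (A A' : List Pt)
    (hA : IsPath (0, i) (X.length, j) A)
    (hA' : IsPath (0, i') (X.length, j') A')
    (hdisj : ∀ e : Pt × Pt, e.2 = (e.1.1 + 1, e.1.2 + 1) →
      e ∈ edges A → e ∉ edges A') :
    selfed X ≤ Nat.dist i i' + edCost X Y A + edCost X Y A' + Nat.dist j j' :=
  selfed_le_of_disjoint_fragment_alignments_general X Y i j i' j' A A' hA hA' hdisj
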